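/- arXiv:math/0204095 — 6 statements merged into one kernel-verified Lean document; each statement's English description precedes it below -/
import Mathlib

section
/- Let V and W be countable sets, let B : V × V → ℤ and C : V × W → ℤ be matrices (with finitely many nonzero entries in each row/column as appropriate), and let D be the block operator on ⊕_V ℤ ⊕ ⊕_W ℤ ⊕ ⊕_W ℤ ⊕ ⋯ such that 1−D is the infinite block matrix with first column (1−Bᵗ, −Cᵗ, 0, 0, …), and with 1 on the diagonal and −1 on the subdiagonal in the remaining columns. Then every element (n, m₁, m₂, m₃, …) of ⊕_V ℕ ⊕ ⊕_W ℕ ⊕ ⊕_W ℕ ⊕ ⋯ is congruent modulo the image of 1−D to the element (n, m₁ + m₂ + ⋯ + m_k, 0, 0, …), where k is chosen so that mᵢ = 0 for i > k. -/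
open Finsupp

/-- The transpose-matrix action: sends `x : ⊕_V ℤ` to `Σ_v x v • (row v)`. -/
noncomputable def matHom {V : Type} {A : Type} [AddCommGroup A]
    (row : V → A) : (V →₀ ℤ) →+ A :=
  Finsupp.liftAddHom (fun v => zmultiplesHom A (row v))

/-- The block operator `1 - D` on `ℤ^V ⊕ ℤ^W ⊕ ℤ^W ⊕ ⋯`, where the model of the
latter group is `(V →₀ ℤ) × (ℕ →₀ (W →₀ ℤ))` (index `i : ℕ` holding `m_{i+1}`).
Its first block column is `(1 - Bᵗ, -Cᵗ, 0, 0, …)` and the remaining columns have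
`1` on the diagonal and `-1` immediately below. -/
noncomputable def oneSubD {V W : Type} (Brow : V → V →₀ ℤ) (Crow : V → W →₀ ℤ) :
    (V →₀ ℤ) × (ℕ →₀ (W →₀ ℤ)) →+ (V →₀ ℤ) × (ℕ →₀ (W →₀ ℤ)) :=
  AddMonoidHom.id _ -
    ((matHom Brow).comp (AddMonoidHom.fst _ _)).prod
      ((Finsupp.mapDomain.addMonoidHom Nat.succ).comp (AddMonoidHom.snd _ _)
        + (Finsupp.singleAddHom 0).comp ((matHom Crow).comp (AddMonoidHom.fst _ _)))

lemma telescope {W : Type} (a : W →₀ ℤ) (j : ℕ) :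
    (∑ i ∈ Finset.range j, Finsupp.single i a)
      - (∑ i ∈ Finset.range j, Finsupp.single (i + 1) a)
      = Finsupp.single 0 a - Finsupp.single j a := by
  induction j with
  | zero => simp
  | succ k ih =>
    rw [Finset.sum_range_succ, Finset.sum_range_succ]
    linear_combination (norm := abel) ih

lemma key {W : Type} (m : ℕ →₀ (W →₀ ℤ)) :
    Finsupp.single 0 (m.sum fun _ x => x) - m
      = (m.sum fun j a => ∑ i ∈ Finset.range j, Finsupp.single i a)
        - Finsupp.mapDomain Nat.succ
            (m.sum fun j a => ∑ i ∈ Finset.range j, Finsupp.single i a) := by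
  induction m using Finsupp.induction_linear with
  | zero => simp
  | add f g hf hg =>
    have h1 : ∀ (a : ℕ), a ∈ f.support ∪ g.support → ∀ (b₁ b₂ : W →₀ ℤ),
        (∑ i ∈ Finset.range a, Finsupp.single i (b₁ + b₂))
          = (∑ i ∈ Finset.range a, Finsupp.single i b₁)
            + ∑ i ∈ Finset.range a, Finsupp.single i b₂ := by
      intro a _ b₁ b₂
      rw [← Finset.sum_add_distrib]
      simp [Finsupp.single_add]
    rw [Finsupp.sum_add_index (by simp) (by intros; rfl),
        Finsupp.sum_add_index (by simp) h1, Finsupp.mapDomain_add, Finsupp.single_add]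
    linear_combination (norm := abel) hf + hg
  | single j a =>
    rcases eq_or_ne a 0 with rfl | ha
    · simp
    rw [Finsupp.sum_single_index (by simp), Finsupp.sum_single_index (by simp),
        Finsupp.mapDomain_finset_sum]
    simp only [Finsupp.mapDomain_single, Nat.succ_eq_add_one]
    rw [telescope]

/-- every element `(n, m₁, m₂, …)` of `ℕ^V ⊕ ℕ^W ⊕ ℕ^W ⊕ ⋯` is congruent
modulo the image of `1 - D` to `(n, m₁ + m₂ + ⋯ + m_k, 0, 0, …)`. -/
theorem stmt0 (V W : Type) [Countable V] [Countable W]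
    (Brow : V → V →₀ ℤ) (Crow : V → W →₀ ℤ)
    (n : V →₀ ℤ) (m : ℕ →₀ (W →₀ ℤ))
    (hn : ∀ v, 0 ≤ n v) (hm : ∀ i w, 0 ≤ m i w) :
    ∃ y : (V →₀ ℤ) × (ℕ →₀ (W →₀ ℤ)),
      ((n, Finsupp.single 0 (m.sum fun _ x => x)) : (V →₀ ℤ) × (ℕ →₀ (W →₀ ℤ))) - (n, m)
        = oneSubD Brow Crow y := by
  refine ⟨(0, m.sum fun j a => ∑ i ∈ Finset.range j, Finsupp.single i a), ?_⟩
  have hkey := key m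
  simp only [oneSubD, AddMonoidHom.sub_apply, AddMonoidHom.id_apply,
    AddMonoidHom.prod_apply, AddMonoidHom.comp_apply, AddMonoidHom.coe_fst,
    AddMonoidHom.coe_snd, AddMonoidHom.add_apply, map_zero,
    Finsupp.mapDomain.addMonoidHom_apply, Finsupp.singleAddHom_apply,
    Finsupp.single_zero, add_zero, Prod.mk_sub_mk, Prod.fst, Prod.snd]
  refine Prod.ext ?_ ?_
  · simp
  · simpa using hkey
end

section
/- Let E be a row-finite directed graph with vertex set E⁰ = V ∪ W where W is the set of sinks and V = E⁰ \ W, and let B : V × V → ℤ and C : V × W → ℤ record the number of edges between the respective vertices. Suppose g : E⁰ → ℝ≥0 satisfies g(v) = Σ_{e ∈ s⁻¹(v)} g(r(e)) for every v ∈ V. Then the induced map f : ℤ^V ⊕ ℤ^W → ℝ given by f(x) = Σ_v x(v) g(v) vanishes on the image of the map (Bᵗ − I, Cᵗ) : ℤ^V → ℤ^V ⊕ ℤ^W, and hence descends to a well-defined group homomorphism on the cokernel of (Bᵗ − I, Cᵗ). -/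
open Finsupp

section GraphK

/- A row-finite graph with sinks `W` and non-sinks `V`: every edge has source in `V`
(sinks emit nothing) and range in `V ⊕ W`; each vertex of `V` emits finitely many edges. -/
variable {V W E : Type} (s : E → V) (r : E → V ⊕ W) [∀ v : V, Fintype {e : E // s e = v}]

/-- The standard basis vector `δ_u` of `ℤ^V ⊕ ℤ^W`. -/
noncomputable def delta : V ⊕ W → (V →₀ ℤ) × (W →₀ ℤ) :=
  Sum.elim (fun v => (Finsupp.single v 1, 0)) (fun w => ((0 : V →₀ ℤ), Finsupp.single w 1))

/-- The map `(Bᵗ - I, Cᵗ) : ℤ^V → ℤ^V ⊕ ℤ^W`, sending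
`δ_v ↦ Σ_{e ∈ s⁻¹(v)} δ_{r e} - δ_v`, i.e. `δ_v ↦ (Bᵗδ_v - δ_v, Cᵗδ_v)` where
`B : V × V → ℤ` and `C : V × W → ℤ` count the edges between the respective vertices. -/
noncomputable def graphK : (V →₀ ℤ) →+ (V →₀ ℤ) × (W →₀ ℤ) :=
  Finsupp.liftAddHom (fun v => zmultiplesHom _
    ((∑ e : {e : E // s e = v}, delta (r e)) - delta (Sum.inl v)))

/-- The homomorphism `ℤ^V ⊕ ℤ^W → ℝ` induced by a function `g` on the vertices:
`(x, y) ↦ Σ_v x(v) g(v) + Σ_w y(w) g(w)`. -/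
noncomputable def inducedF (g : V ⊕ W → ℝ) : (V →₀ ℤ) × (W →₀ ℤ) → ℝ :=
  fun p => p.1.sum (fun v n => (n : ℝ) * g (Sum.inl v))
    + p.2.sum (fun w n => (n : ℝ) * g (Sum.inr w))

end GraphK

section InducedHom

variable {V W E : Type}

noncomputable def inducedHom (g : V ⊕ W → ℝ) : (V →₀ ℤ) × (W →₀ ℤ) →+ ℝ :=
  (liftAddHom fun v => zmultiplesHom ℝ (g (Sum.inl v))).coprod
    (liftAddHom fun w => zmultiplesHom ℝ (g (Sum.inr w)))

theorem inducedHom_apply (g : V ⊕ W → ℝ) (p : (V →₀ ℤ) × (W →₀ ℤ)) :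
    inducedHom g p = inducedF g p := by
  simp [inducedHom, inducedF, liftAddHom_apply, Finsupp.sum, zsmul_eq_mul]

theorem inducedHom_delta (g : V ⊕ W → ℝ) (u : V ⊕ W) : inducedHom g (delta u) = g u := by
  cases u <;> simp [inducedHom, delta]

theorem inducedHom_graphK_single (s : E → V) (r : E → V ⊕ W)
    [∀ v : V, Fintype {e : E // s e = v}] (g : V ⊕ W → ℝ) (v : V) (n : ℤ) :
    inducedHom g (graphK s r (single v n)) =
      n * ((∑ e : {e : E // s e = v}, g (r e)) - g (Sum.inl v)) := by
  simp only [graphK, liftAddHom_apply_single, zmultiplesHom_apply, map_zsmul, map_sub, map_sum,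
    inducedHom_delta, zsmul_eq_mul]

theorem inducedHom_comp_graphK (s : E → V) (r : E → V ⊕ W)
    [∀ v : V, Fintype {e : E // s e = v}] (g : V ⊕ W → ℝ)
    (htrace : ∀ v : V, g (Sum.inl v) = ∑ e : {e : E // s e = v}, g (r e)) :
    (inducedHom g).comp (graphK s r) = 0 :=
  Finsupp.addHom_ext fun v n => by
    rw [AddMonoidHom.comp_apply, inducedHom_graphK_single, htrace v, sub_self, mul_zero,
      AddMonoidHom.zero_apply]

theorem range_graphK_le_ker_inducedHom (s : E → V) (r : E → V ⊕ W)
    [∀ v : V, Fintype {e : E // s e = v}] (g : V ⊕ W → ℝ)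
    (htrace : ∀ v : V, g (Sum.inl v) = ∑ e : {e : E // s e = v}, g (r e)) :
    (graphK s r).range ≤ (inducedHom g).ker := by
  rintro _ ⟨x, rfl⟩
  exact DFunLike.congr_fun (inducedHom_comp_graphK s r g htrace) x

end InducedHom

/-- if `g : E⁰ → ℝ≥0` satisfies the graph-trace identity
`g(v) = Σ_{e ∈ s⁻¹(v)} g(r e)` at every non-sink `v`, then the induced map
`f(x) = Σ_v x(v) g(v)` vanishes on the image of `(Bᵗ - I, Cᵗ) : ℤ^V → ℤ^V ⊕ ℤ^W`
and descends to a group homomorphism on the cokernel. -/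
theorem stmt2 (V W E : Type) [Countable V] [Countable W] [Countable E]
    (s : E → V) (r : E → V ⊕ W) [∀ v : V, Fintype {e : E // s e = v}]
    (g : V ⊕ W → ℝ) (hg0 : ∀ u, 0 ≤ g u)
    (htrace : ∀ v : V, g (Sum.inl v) = ∑ e : {e : E // s e = v}, g (r e)) :
    (∀ x : V →₀ ℤ, inducedF g (graphK s r x) = 0) ∧
    ∃ fbar : ((V →₀ ℤ) × (W →₀ ℤ)) ⧸ (graphK s r).range →+ ℝ,
      ∀ p : (V →₀ ℤ) × (W →₀ ℤ), fbar (QuotientAddGroup.mk p) = inducedF g p := by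
  refine ⟨fun x => ?_, QuotientAddGroup.lift _ (inducedHom g)
    (range_graphK_le_ker_inducedHom s r g htrace), fun p => ?_⟩
  · rw [← inducedHom_apply]
    exact DFunLike.congr_fun (inducedHom_comp_graphK s r g htrace) x
  · rw [QuotientAddGroup.lift_mk, inducedHom_apply]
end

section
/- Let E be a directed graph with finitely many vertices, no directed cycles, and no infinite emitters. Let W be the set of sinks, V = E⁰ \ W, and B : V × V → ℤ, C : V × W → ℤ the edge-count matrices. Then the matrix B is nilpotent, and consequently the map (Bᵗ − I, Cᵗ) : ℤ^V → ℤ^V ⊕ ℤ^W is injective and its cokernel is a free abelian group of rank |W|. -/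
open Finsupp

section GraphK

/- A row-finite graph with sinks `W` and non-sinks `V`: every edge has source in `V`
and range in `V ⊕ W`; each `v : V` emits finitely many (and at least one) edges. -/
variable {V W E : Type} (s : E → V) (r : E → V ⊕ W) [∀ v : V, Fintype {e : E // s e = v}]

/-- The transposed matrix `Bᵗ : ℤ^V → ℤ^V` of the non-sink-to-non-sink block `B`,
sending `δ_v ↦ Σ_{e ∈ s⁻¹(v), r e ∈ V} δ_{r e}`. -/
noncomputable def Bt : (V →₀ ℤ) →+ (V →₀ ℤ) :=
  Finsupp.liftAddHom (fun v => zmultiplesHom _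
    (∑ e : {e : E // s e = v},
      Sum.elim (fun u => Finsupp.single u (1 : ℤ)) (fun _ => 0) (r e)))

/-- The sink block `Cᵗ : ℤ^V → ℤ^W`. -/
noncomputable def Ct : (V →₀ ℤ) →+ (W →₀ ℤ) :=
  Finsupp.liftAddHom (fun v => zmultiplesHom _
    (∑ e : {e : E // s e = v},
      Sum.elim (fun _ => 0) (fun w => Finsupp.single w (1 : ℤ)) (r e)))

lemma delta_fst (x : V ⊕ W) :
    (delta x : (V →₀ ℤ) × (W →₀ ℤ)).1
      = Sum.elim (fun u => Finsupp.single u (1 : ℤ)) (fun _ => 0) x := by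
  cases x <;> rfl

lemma delta_snd (x : V ⊕ W) :
    (delta x : (V →₀ ℤ) × (W →₀ ℤ)).2
      = Sum.elim (fun _ => 0) (fun w => Finsupp.single w (1 : ℤ)) x := by
  cases x <;> rfl

lemma Bt_single (v : V) (b : ℤ) : Bt s r (Finsupp.single v b)
    = b • ∑ e : {e : E // s e = v},
      Sum.elim (fun u => Finsupp.single u (1 : ℤ)) (fun _ => 0) (r e) := by
  simp [Bt, Finsupp.liftAddHom_apply_single, zmultiplesHom_apply]

lemma Ct_single (v : V) (b : ℤ) : Ct s r (Finsupp.single v b)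
    = b • ∑ e : {e : E // s e = v},
      Sum.elim (fun _ => 0) (fun w => Finsupp.single w (1 : ℤ)) (r e) := by
  simp [Ct, Finsupp.liftAddHom_apply_single, zmultiplesHom_apply]

lemma graphK_eq :
    graphK s r = ((Bt s r - AddMonoidHom.id _).prod (Ct s r)) := by
  apply Finsupp.addHom_ext
  intro v b
  have h1 : graphK s r (Finsupp.single v b)
      = b • ((∑ e : {e : E // s e = v}, delta (r e)) - delta (Sum.inl v)) := by
    simp [graphK, Finsupp.liftAddHom_apply_single, zmultiplesHom_apply]
  rw [h1]
  have hrhs : ((Bt s r - AddMonoidHom.id _).prod (Ct s r)) (Finsupp.single v b)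
      = (Bt s r (Finsupp.single v b) - Finsupp.single v b, Ct s r (Finsupp.single v b)) := rfl
  rw [hrhs]
  refine Prod.ext ?_ ?_
  · simp only [Prod.smul_fst, Prod.fst_sub, Prod.fst_sum, delta_fst, Bt_single,
      Sum.elim_inl, smul_sub]
    congr 1
    rw [Finsupp.smul_single, smul_eq_mul, mul_one]
  · simp only [Prod.smul_snd, Prod.snd_sub, Prod.snd_sum, delta_snd, Ct_single,
      Sum.elim_inl, smul_sub, smul_zero, sub_zero]

end GraphK

/-- for a graph with finitely many vertices, no loops, and no infinite
emitters (with sinks `W` and non-sinks `V`), the matrix `B` is nilpotent; consequently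
`(Bᵗ - I, Cᵗ) : ℤ^V → ℤ^V ⊕ ℤ^W` is injective and its cokernel is free abelian of
rank `|W|`, i.e. isomorphic to `ℤ^W`. -/
theorem stmt7 (V W E : Type) [Fintype V] [Fintype W] [Countable E]
    (s : E → V) (r : E → V ⊕ W) [∀ v : V, Fintype {e : E // s e = v}]
    (hV : ∀ v : V, Nonempty {e : E // s e = v})
    (hnoloop : ∀ v : V,
      ¬ Relation.TransGen (fun a b : V => ∃ e : E, s e = a ∧ r e = Sum.inl b) v v) :
    (∃ k : ℕ, ∀ x : V →₀ ℤ, (fun y => Bt s r y)^[k] x = 0) ∧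
    Function.Injective (graphK s r) ∧
    Nonempty ((((V →₀ ℤ) × (W →₀ ℤ)) ⧸ (graphK s r).range) ≃+ (W →₀ ℤ)) := by
  classical
  set B : AddMonoid.End (V →₀ ℤ) := (Bt s r : AddMonoid.End (V →₀ ℤ)) with hB
  have happly : ∀ (f g : AddMonoid.End (V →₀ ℤ)) (x : V →₀ ℤ), (f * g) x = f (g x) :=
    fun _ _ _ => rfl
  have hsubapp : ∀ (f g : AddMonoid.End (V →₀ ℤ)) (x : V →₀ ℤ), (f - g) x = f x - g x :=
    fun _ _ _ => rfl
  have honeapp : ∀ x : V →₀ ℤ, (1 : AddMonoid.End (V →₀ ℤ)) x = x := fun _ => rfl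
  have hnegoneapp : ∀ x : V →₀ ℤ, (-1 : AddMonoid.End (V →₀ ℤ)) x = -x := fun _ => rfl
  -- well-foundedness of the "successor" relation
  have hwf : WellFounded (fun a b : V => ∃ e : E, s e = b ∧ r e = Sum.inl a) := by
    have : IsTrans V (Relation.TransGen (fun a b : V => ∃ e : E, s e = b ∧ r e = Sum.inl a)) :=
      ⟨fun _ _ _ => Relation.TransGen.trans⟩
    have : IsIrrefl V (Relation.TransGen (fun a b : V => ∃ e : E, s e = b ∧ r e = Sum.inl a)) := by
      constructor
      intro v hv
      exact hnoloop v (Relation.transGen_swap.mp hv)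
    exact Subrelation.wf
      (r := Relation.TransGen (fun a b : V => ∃ e : E, s e = b ∧ r e = Sum.inl a))
      (fun h => Relation.TransGen.single h)
      (Finite.wellFounded_of_trans_of_irrefl _)
  -- pointwise nilpotency on basis vectors
  have key : ∀ v : V, ∃ k : ℕ, ∀ m, k ≤ m → (B ^ m) (Finsupp.single v 1) = 0 := by
    intro v
    induction v using WellFounded.induction hwf with
    | _ v ih =>
      have hBv : B (Finsupp.single v 1) = ∑ e : {e : E // s e = v},
          Sum.elim (fun u => Finsupp.single u (1 : ℤ)) (fun _ => 0) (r e) := by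
        have := Bt_single s r v 1
        rwa [one_smul] at this
      choose k hk using fun (u : V) (h : ∃ e : E, s e = v ∧ r e = Sum.inl u) => ih u ⟨h.choose, h.choose_spec.1, h.choose_spec.2⟩
      obtain ⟨K, hK⟩ : ∃ K : ℕ, ∀ (u : V) (h : ∃ e : E, s e = v ∧ r e = Sum.inl u),
          (B ^ K) (Finsupp.single u 1) = 0 := by
        refine ⟨Finset.univ.sup (fun u : V =>
          if h : ∃ e : E, s e = v ∧ r e = Sum.inl u then k u h else 0), fun u h => ?_⟩
        refine hk u h _ ?_
        have := Finset.le_sup (f := fun u : V =>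
          if h : ∃ e : E, s e = v ∧ r e = Sum.inl u then k u h else 0) (Finset.mem_univ u)
        simpa only [dif_pos h] using this
      refine ⟨K + 1, fun m hm => ?_⟩
      obtain ⟨j, rfl⟩ : ∃ j, m = K + 1 + j := Nat.exists_eq_add_of_le hm
      have h1 : (B ^ (K + 1)) (Finsupp.single v 1) = 0 := by
        have hs : (B ^ (K + 1)) (Finsupp.single v 1) = (B ^ K) (B (Finsupp.single v 1)) := by
          rw [pow_succ]; rfl
        rw [hs, hBv, map_sum]
        refine Finset.sum_eq_zero fun e _ => ?_
        rcases he : r e.1 with u | w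
        · simpa using hK u ⟨e.1, e.2, he⟩
        · simp
      have hs : (B ^ (K + 1 + j)) (Finsupp.single v 1)
          = (B ^ j) ((B ^ (K + 1)) (Finsupp.single v 1)) := by
        rw [add_comm (K + 1) j, pow_add]; rfl
      rw [hs, h1, map_zero]
  choose k hk using key
  set K : ℕ := Finset.univ.sup k with hKdef
  have hBK : B ^ K = 0 := by
    refine DFunLike.ext _ _ fun x => ?_
    show (B ^ K) x = 0
    induction x using Finsupp.induction_linear with
    | zero => simp
    | add f g hf hg => rw [map_add, hf, hg, add_zero]
    | single v c =>
        have hc : Finsupp.single v c = c • Finsupp.single v (1 : ℤ) := by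
          rw [Finsupp.smul_single, smul_eq_mul, mul_one]
        rw [hc, map_zsmul, hk v K (Finset.le_sup (Finset.mem_univ v)), smul_zero]
  have hnil : ∀ x : V →₀ ℤ, (fun y => Bt s r y)^[K] x = 0 := by
    intro x
    have : (fun y => Bt s r y)^[K] x = (B ^ K) x := rfl
    rw [this, hBK]
    rfl
  refine ⟨⟨K, hnil⟩, ?_, ?_⟩
  · -- injectivity
    rw [injective_iff_map_eq_zero]
    intro x hx
    rw [graphK_eq] at hx
    have h1 : Bt s r x - x = 0 := congrArg Prod.fst hx
    have h2 : B x = x := sub_eq_zero.mp h1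
    have h3 : (B ^ K) x = x := by
      clear hnil hBK hKdef
      induction K with
      | zero => rfl
      | succ n ihn =>
          have : (B ^ (n + 1)) x = (B ^ n) (B x) := by rw [pow_succ]; rfl
          rw [this, h2, ihn]
    rw [hBK] at h3
    exact h3.symm
  · -- the cokernel
    set N : AddMonoid.End (V →₀ ℤ) := ∑ j ∈ Finset.range K, B ^ j with hN
    have hNB : N * (B - 1) = -1 := by rw [hN, geom_sum_mul, hBK, zero_sub]
    have hBN : (B - 1) * N = -1 := by rw [hN, mul_geom_sum, hBK, zero_sub]
    set φ : (V →₀ ℤ) × (W →₀ ℤ) →+ (W →₀ ℤ) :=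
      (AddMonoidHom.snd _ _) + (Ct s r).comp ((N : (V →₀ ℤ) →+ (V →₀ ℤ)).comp
        (AddMonoidHom.fst _ _)) with hφ
    have hφ_apply : ∀ p : (V →₀ ℤ) × (W →₀ ℤ), φ p = p.2 + Ct s r (N p.1) := fun p => rfl
    have hsurj : Function.Surjective φ := by
      intro y
      refine ⟨(0, y), ?_⟩
      rw [hφ_apply]
      simp
    have hNBx : ∀ x : V →₀ ℤ, N (B x - x) = -x := by
      intro x
      have h := congrFun (congrArg (DFunLike.coe) hNB) x
      rw [happly, hsubapp, honeapp, hnegoneapp] at h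
      exact h
    have hBNx : ∀ x : V →₀ ℤ, B (N x) - N x = -x := by
      intro x
      have h := congrFun (congrArg (DFunLike.coe) hBN) x
      rw [happly, hnegoneapp] at h
      rw [← h, hsubapp, honeapp]
    have hrange : (graphK s r).range = φ.ker := by
      ext p
      constructor
      · rintro ⟨x, rfl⟩
        have hKx : graphK s r x = (Bt s r x - x, Ct s r x) := by rw [graphK_eq]; rfl
        rw [AddMonoidHom.mem_ker, hKx, hφ_apply]
        have : N (Bt s r x - x) = -x := hNBx x
        rw [this, map_neg, add_neg_cancel]
      · intro hp
        rw [AddMonoidHom.mem_ker, hφ_apply] at hp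
        refine ⟨-(N p.1), ?_⟩
        have hKx : graphK s r (-(N p.1)) = (Bt s r (-(N p.1)) - -(N p.1), Ct s r (-(N p.1))) := by
          rw [graphK_eq]; rfl
        rw [hKx]
        have h1 : Bt s r (-(N p.1)) - -(N p.1) = p.1 := by
          have h' : B (N p.1) - N p.1 = -p.1 := hBNx p.1
          have : Bt s r (-(N p.1)) - -(N p.1) = -(B (N p.1) - N p.1) := by
            show B (-(N p.1)) - -(N p.1) = _
            rw [map_neg]
            abel
          rw [this, h', neg_neg]
        have h2 : Ct s r (-(N p.1)) = p.2 := by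
          rw [map_neg, eq_comm, eq_neg_iff_add_eq_zero]
          exact hp
        rw [h1, h2]
    exact ⟨(QuotientAddGroup.quotientAddEquivOfEq hrange).trans
      (QuotientAddGroup.quotientKerEquivOfSurjective φ hsurj)⟩
end

section
/- Let E be a row-finite directed graph with set of sinks W and V = E⁰ \ W, and edge-count matrices B : V × V → ℤ, C : V × W → ℤ. Define T(E) to be the set of graph traces of norm 1: functions g : E⁰ → ℝ≥0 with g(v) = Σ_{e ∈ s⁻¹(v)} g(r(e)) for all v ∈ V and Σ_{v ∈ E⁰} g(v) = 1. Define S to be the set of group homomorphisms f : coker((Bᵗ−I, Cᵗ)) → ℝ such that f([x]) ≥ 0 for all x ∈ ℕ^V ⊕ ℕ^W and sup over finite F ⊆ E⁰ of Σ_{v ∈ F} f([δ_v]) equals 1 (equivalently, for any enumeration v₁, v₂, … of E⁰, limₙ Σᵢ₌₁ⁿ f([δ_{vᵢ}]) = 1). Then the map ι : S → T(E), ι(f)(v) = f([δ_v]), is a bijection. -/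
open Finsupp

section GraphK

/- A row-finite graph with sinks `W` and non-sinks `V`: every edge has source in `V`
and range in `V ⊕ W`; each `v : V` emits finitely many edges. -/
variable {V W E : Type} (s : E → V) (r : E → V ⊕ W) [∀ v : V, Fintype {e : E // s e = v}]

/-- `g` is a graph trace of norm 1: nonnegative, satisfying the trace identity at every
non-sink, with total sum 1 (`HasSum` expresses that for any enumeration the partial sums
converge to 1). -/
def IsGraphTraceOne (g : V ⊕ W → ℝ) : Prop :=
  (∀ u, 0 ≤ g u) ∧
  (∀ v : V, g (Sum.inl v) = ∑ e : {e : E // s e = v}, g (r e)) ∧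
  HasSum g 1

/-- `f` is a state on the cokernel `G = coker (Bᵗ - I, Cᵗ)`: nonnegative on the classes
of `ℕ^V ⊕ ℕ^W`, and the values `f([δ_u])`, `u ∈ E⁰`, sum to 1. -/
def IsStateOn (f : (((V →₀ ℤ) × (W →₀ ℤ)) ⧸ (graphK s r).range) →+ ℝ) : Prop :=
  (∀ x : (V →₀ ℤ) × (W →₀ ℤ), (∀ v, 0 ≤ x.1 v) → (∀ w, 0 ≤ x.2 w) →
    0 ≤ f (QuotientAddGroup.mk x)) ∧
  HasSum (fun u : V ⊕ W => f (QuotientAddGroup.mk (delta u))) 1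

end GraphK

section CokernelStates

open QuotientAddGroup

variable {V W : Type}

lemma delta_fst_nonneg (u : V ⊕ W) (v : V) : 0 ≤ (delta (W := W) u).1 v := by
  classical
  cases u <;> simp [delta, single_apply, apply_ite]

lemma delta_snd_nonneg (u : V ⊕ W) (w : W) : 0 ≤ (delta (V := V) u).2 w := by
  classical
  cases u <;> simp [delta, single_apply, apply_ite]

lemma addMonoidHom_ext_delta {M : Type*} [AddCommMonoid M]
    {φ ψ : (V →₀ ℤ) × (W →₀ ℤ) →+ M} (h : ∀ u, φ (delta u) = ψ (delta u)) : φ = ψ := by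
  rw [← φ.coprod_unique, ← ψ.coprod_unique]
  congr 1 <;> refine Finsupp.addHom_ext' fun _ => AddMonoidHom.ext_int ?_
  exacts [h (Sum.inl _), h (Sum.inr _)]

section Extension

variable {M : Type*} [AddCommGroup M]

/-- The additive map `x ↦ ∑_u x_u g(u)` on `ℤ^V ⊕ ℤ^W`. -/
noncomputable def extendDelta (g : V ⊕ W → M) : (V →₀ ℤ) × (W →₀ ℤ) →+ M :=
  (liftAddHom fun v => zmultiplesHom M (g (Sum.inl v))).coprod
    (liftAddHom fun w => zmultiplesHom M (g (Sum.inr w)))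

@[simp]
lemma extendDelta_delta (g : V ⊕ W → M) (u : V ⊕ W) : extendDelta g (delta u) = g u := by
  cases u <;> simp [extendDelta, delta]

lemma extendDelta_nonneg [PartialOrder M] [IsOrderedAddMonoid M] {g : V ⊕ W → M}
    (hg : ∀ u, 0 ≤ g u) {x : (V →₀ ℤ) × (W →₀ ℤ)} (hx₁ : ∀ v, 0 ≤ x.1 v) (hx₂ : ∀ w, 0 ≤ x.2 w) :
    0 ≤ extendDelta g x := by
  simp only [extendDelta, AddMonoidHom.coprod_apply, liftAddHom_apply]
  exact add_nonneg (Finset.sum_nonneg fun v _ => zsmul_nonneg (hg _) (hx₁ v))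
    (Finset.sum_nonneg fun w _ => zsmul_nonneg (hg _) (hx₂ w))

end Extension

variable {E : Type} {s : E → V} {r : E → V ⊕ W} [∀ v : V, Fintype {e : E // s e = v}]

variable (s r) in
lemma graphK_single_one (v : V) :
    graphK s r (single v 1) = (∑ e : {e : E // s e = v}, delta (r e)) - delta (Sum.inl v) := by
  simp [graphK]

lemma mk_delta_inl (v : V) :
    (mk (delta (Sum.inl v)) : ((V →₀ ℤ) × (W →₀ ℤ)) ⧸ (graphK s r).range) =
      ∑ e : {e : E // s e = v}, mk (delta (r e)) := by
  rw [← mk_sum, QuotientAddGroup.eq]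
  exact ⟨single v 1, by rw [graphK_single_one]; abel⟩

lemma hom_ext_mk_delta {M : Type*} [AddCommMonoid M]
    {φ ψ : ((V →₀ ℤ) × (W →₀ ℤ)) ⧸ (graphK s r).range →+ M}
    (h : ∀ u, φ (mk (delta u)) = ψ (mk (delta u))) : φ = ψ :=
  addMonoidHom_ext _ (addMonoidHom_ext_delta h)

lemma extendDelta_comp_graphK {M : Type*} [AddCommGroup M] {g : V ⊕ W → M}
    (hg : ∀ v : V, g (Sum.inl v) = ∑ e : {e : E // s e = v}, g (r e)) :
    (extendDelta g).comp (graphK s r) = 0 :=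
  Finsupp.addHom_ext' fun v => AddMonoidHom.ext_int <| by
    simp [graphK_single_one, hg]

lemma isGraphTraceOne_of_isStateOn {f : ((V →₀ ℤ) × (W →₀ ℤ)) ⧸ (graphK s r).range →+ ℝ}
    (hf : IsStateOn s r f) : IsGraphTraceOne s r fun u => f (mk (delta u)) :=
  ⟨fun u => hf.1 _ (delta_fst_nonneg u) (delta_snd_nonneg u),
    fun v => by simp only [mk_delta_inl, map_sum], hf.2⟩

/-- The trace identity says exactly that the additive extension of `g` kills the image of
`(Bᵗ - I, Cᵗ)`, so it descends to the cokernel; uniqueness holds because the `[δ_u]` generate. -/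
lemma existsUnique_isStateOn_of_isGraphTraceOne {g : V ⊕ W → ℝ} (hg : IsGraphTraceOne s r g) :
    ∃! f, IsStateOn s r f ∧ ∀ u : V ⊕ W, f (mk (delta u)) = g u := by
  obtain ⟨hg₀, hg_trace, hg_sum⟩ := hg
  let f := lift (graphK s r).range (extendDelta g) <| by
    rintro _ ⟨y, rfl⟩
    exact DFunLike.congr_fun (extendDelta_comp_graphK hg_trace) y
  have hf_delta (u : V ⊕ W) : f (mk (delta u)) = g u := extendDelta_delta g u
  refine ⟨f, ⟨⟨fun x hx₁ hx₂ => extendDelta_nonneg hg₀ hx₁ hx₂, ?_⟩, hf_delta⟩, ?_⟩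
  · simpa only [hf_delta] using hg_sum
  · rintro f' ⟨-, hf'⟩
    exact hom_ext_mk_delta fun u => (hf' u).trans (hf_delta u).symm

end CokernelStates

/-- for a row-finite graph, the map `ι`, sending a state `f` on the
cokernel `G = coker (Bᵗ - I, Cᵗ)` to the function `u ↦ f([δ_u])`, is a bijection from
states on `G` to graph traces of norm 1: `ι(f)` is always a graph trace of norm 1, and
every graph trace of norm 1 arises as `ι(f)` for a unique state `f`. -/
theorem stmt10 (V W E : Type) [Countable V] [Countable W] [Countable E]
    (s : E → V) (r : E → V ⊕ W) [∀ v : V, Fintype {e : E // s e = v}] :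
    (∀ f, IsStateOn s r f →
      IsGraphTraceOne s r (fun u : V ⊕ W => f (QuotientAddGroup.mk (delta u)))) ∧
    (∀ g : V ⊕ W → ℝ, IsGraphTraceOne s r g →
      ∃! f, IsStateOn s r f ∧ ∀ u : V ⊕ W, f (QuotientAddGroup.mk (delta u)) = g u) :=
  ⟨fun _ => isGraphTraceOne_of_isStateOn, fun _ => existsUnique_isStateOn_of_isGraphTraceOne⟩
end

section
/- Let A be a square matrix over ℕ indexed by a finite set S, and suppose g : S → ℝ≥0 satisfies g(v) = Σ_w A(v,w) g(w) for all v ∈ S. If (A^k)(v,v) ≥ 2 for some v ∈ S and k ≥ 1, then g(v) = 0. -/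
/-! Iterating the fixed-point equation gives `g = Aᵏ g`; keeping only the diagonal term of row `v`
yields `g v ≥ (Aᵏ) v v * g v ≥ 2 * g v`, which forces `g v = 0` since `g v ≥ 0`. -/

namespace Matrix

variable {n R : Type*} [Fintype n]

theorem pow_mulVec_eq_self_of_mulVec_eq_self [DecidableEq n] [Semiring R] {B : Matrix n n R}
    {g : n → R} (h : B *ᵥ g = g) (k : ℕ) : B ^ k *ᵥ g = g := by
  induction k with
  | zero => simp
  | succ k ih => rw [pow_succ, ← mulVec_mulVec, h, ih]

theorem diag_mul_le_mulVec [Semiring R] [PartialOrder R] [IsOrderedRing R]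
    {B : Matrix n n R} (hB : ∀ i j, 0 ≤ B i j) {g : n → R} (hg : 0 ≤ g) (i : n) :
    B i i * g i ≤ (B *ᵥ g) i :=
  Finset.single_le_sum (f := fun j => B i j * g j) (fun j _ => mul_nonneg (hB i j) (hg j))
    (Finset.mem_univ i)

theorem eq_zero_of_mulVec_eq_self_of_one_lt_diag [Semiring R] [LinearOrder R]
    [IsStrictOrderedRing R] {B : Matrix n n R} (hB : ∀ i j, 0 ≤ B i j) {g : n → R}
    (hg : 0 ≤ g) (hfix : B *ᵥ g = g) {i : n} (hi : 1 < B i i) : g i = 0 := by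
  have hle : B i i * g i ≤ g i := by simpa only [hfix] using diag_mul_le_mulVec hB hg i
  by_contra hne
  have hpos : 0 < g i := (hg i).lt_of_ne' hne
  exact (lt_mul_of_one_lt_left hpos hi).not_ge hle

end Matrix

open Matrix

theorem stmt13_general (S : Type) [Fintype S] [DecidableEq S] (A : Matrix S S ℕ)
    (g : S → ℝ) (hg0 : ∀ v, 0 ≤ g v)
    (hfix : ∀ v : S, g v = ∑ w : S, (A v w : ℝ) * g w)
    (v : S) (k : ℕ) (h2 : 2 ≤ (A ^ k) v v) :
    g v = 0 := by
  set B : Matrix S S ℝ := A.map (Nat.castRingHom ℝ)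
  have hB : B *ᵥ g = g := funext fun w => (hfix w).symm
  have hBk : B ^ k = (A ^ k).map (Nat.castRingHom ℝ) := (Matrix.map_pow A _ k).symm
  refine eq_zero_of_mulVec_eq_self_of_one_lt_diag (B := B ^ k) (fun i j => ?_) hg0
    (pow_mulVec_eq_self_of_mulVec_eq_self hB k) ?_
  · rw [hBk]
    exact Nat.cast_nonneg _
  · rw [hBk, map_apply, Nat.coe_castRingHom]
    exact_mod_cast h2

/-- if `A` is a square matrix over `ℕ` indexed by a finite set `S`,
`g : S → ℝ≥0` satisfies `g(v) = Σ_w A(v,w) g(w)` for all `v`, and `(A^k)(v,v) ≥ 2`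
for some `v` and some `k ≥ 1`, then `g(v) = 0`. -/
theorem stmt13 (S : Type) [Fintype S] [DecidableEq S] (A : Matrix S S ℕ)
    (g : S → ℝ) (hg0 : ∀ v, 0 ≤ g v)
    (hfix : ∀ v : S, g v = ∑ w : S, (A v w : ℝ) * g w)
    (v : S) (k : ℕ) (hk : 1 ≤ k) (h2 : 2 ≤ (A ^ k) v v) :
    g v = 0 :=
  stmt13_general S A g hg0 hfix v k h2
end

section
/- Let V, W be types with V ⊕ W countable, let B : V → V → ℤ and C : V → W → ℤ, and let K : ⊕_V ℤ → (⊕_V ℤ) × (⊕_W ℤ) be the map x ↦ (Bᵗx − x, Cᵗx). Let M := (⊕_V ℤ) × (⊕_W ℤ) × (⊕_ℕ ⊕_W ℤ) and let D be the endomorphism of M for which 1 − D is given by the infinite block matrix whose first block column is (1 − Bᵗ, −Cᵗ, 0, 0, …) and whose remaining columns have 1 on the diagonal and −1 immediately below it. Then the inclusion j of (⊕_V ℤ) × (⊕_W ℤ) into M as the first two coordinates induces a group isomorphism coker K ≅ coker(1 − D). -/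
open Finsupp

/-- The map `K = (Bᵗ - I, Cᵗ) : ℤ^V → ℤ^V ⊕ ℤ^W`, `x ↦ (Bᵗx - x, Cᵗx)`. -/
noncomputable def mapK {V W : Type} (Brow : V → V →₀ ℤ) (Crow : V → W →₀ ℤ) :
    (V →₀ ℤ) →+ (V →₀ ℤ) × (W →₀ ℤ) :=
  (matHom Brow - AddMonoidHom.id _).prod (matHom Crow)

/-- The inclusion `j : ℤ^V ⊕ ℤ^W → M` as the first two coordinates. -/
noncomputable def inclJ {V W : Type} :
    (V →₀ ℤ) × (W →₀ ℤ) →+ (V →₀ ℤ) × (ℕ →₀ (W →₀ ℤ)) :=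
  (AddMonoidHom.fst _ _).prod ((Finsupp.singleAddHom 0).comp (AddMonoidHom.snd _ _))

noncomputable def sumComp {W : Type} : (ℕ →₀ (W →₀ ℤ)) →+ (W →₀ ℤ) :=
  Finsupp.liftAddHom (fun _ => AddMonoidHom.id _)

noncomputable def retr {V W : Type} :
    (V →₀ ℤ) × (ℕ →₀ (W →₀ ℤ)) →+ (V →₀ ℤ) × (W →₀ ℤ) :=
  (AddMonoidHom.fst _ _).prod (sumComp.comp (AddMonoidHom.snd _ _))

lemma sumComp_single {W : Type} (n : ℕ) (y : W →₀ ℤ) :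
    sumComp (Finsupp.single n y) = y := by
  simp [sumComp]

lemma sumComp_shift {W : Type} (m : ℕ →₀ (W →₀ ℤ)) :
    sumComp (Finsupp.mapDomain Nat.succ m) = sumComp m := by
  induction m using Finsupp.induction with
  | zero => simp
  | single_add n y m hn hy ih =>
      rw [Finsupp.mapDomain_add, map_add, map_add, ih, Finsupp.mapDomain_single,
        sumComp_single, sumComp_single]

lemma oneSubD_apply {V W : Type} (Brow : V → V →₀ ℤ) (Crow : V → W →₀ ℤ)
    (x : V →₀ ℤ) (m : ℕ →₀ (W →₀ ℤ)) :
    oneSubD Brow Crow (x, m) =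
      (x - matHom Brow x,
        m - (Finsupp.mapDomain Nat.succ m + Finsupp.single 0 (matHom Crow x))) := rfl

lemma mapK_apply {V W : Type} (Brow : V → V →₀ ℤ) (Crow : V → W →₀ ℤ) (x : V →₀ ℤ) :
    mapK Brow Crow x = (matHom Brow x - x, matHom Crow x) := rfl

lemma inclJ_apply {V W : Type} (p : (V →₀ ℤ) × (W →₀ ℤ)) :
    inclJ p = (p.1, Finsupp.single 0 p.2) := rfl

lemma retr_apply {V W : Type} (p : (V →₀ ℤ) × (ℕ →₀ (W →₀ ℤ))) :
    retr p = (p.1, sumComp p.2) := rfl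

lemma single_diff_mem {V W : Type} (Brow : V → V →₀ ℤ) (Crow : V → W →₀ ℤ)
    (n : ℕ) (y : W →₀ ℤ) :
    ((0 : V →₀ ℤ), Finsupp.single 0 y - Finsupp.single n y) ∈
      (oneSubD Brow Crow).range := by
  induction n with
  | zero => rw [sub_self]; exact (oneSubD Brow Crow).range.zero_mem
  | succ n ih =>
      have h : ((0 : V →₀ ℤ), Finsupp.single n y - Finsupp.single (n + 1) y) ∈
          (oneSubD Brow Crow).range := by
        refine ⟨(0, Finsupp.single n y), ?_⟩
        simp [oneSubD_apply, Finsupp.mapDomain_single]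
      have := AddSubgroup.add_mem _ ih h
      simpa [Prod.mk_add_mk, sub_add_sub_cancel] using this

lemma tail_mem {V W : Type} (Brow : V → V →₀ ℤ) (Crow : V → W →₀ ℤ)
    (m : ℕ →₀ (W →₀ ℤ)) :
    ((0 : V →₀ ℤ), Finsupp.single 0 (sumComp m) - m) ∈
      (oneSubD Brow Crow).range := by
  induction m using Finsupp.induction with
  | zero => rw [map_zero, Finsupp.single_zero, sub_zero]; exact (oneSubD Brow Crow).range.zero_mem
  | single_add n y m hn hy ih =>
      have h := AddSubgroup.add_mem _ (single_diff_mem Brow Crow n y) ih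
      have e : ((0 : V →₀ ℤ), Finsupp.single 0 y - Finsupp.single n y) +
          ((0 : V →₀ ℤ), Finsupp.single 0 (sumComp m) - m) =
          ((0 : V →₀ ℤ), Finsupp.single 0 (sumComp (Finsupp.single n y + m)) -
            (Finsupp.single n y + m)) := by
        simp only [Prod.mk_add_mk, map_add, sumComp_single, add_zero]
        rw [Finsupp.single_add]
        abel
      rwa [e] at h

/-- the inclusion `j` of `ℤ^V ⊕ ℤ^W` into `M = ℤ^V ⊕ ℤ^W ⊕ ℤ^W ⊕ ⋯`
as the first two coordinates induces a group isomorphism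
`coker K ≅ coker (1 - D)`. -/
theorem stmt14 (V W : Type) [Countable V] [Countable W]
    (Brow : V → V →₀ ℤ) (Crow : V → W →₀ ℤ) :
    ∃ iso : (((V →₀ ℤ) × (W →₀ ℤ)) ⧸ (mapK Brow Crow).range) ≃+
        (((V →₀ ℤ) × (ℕ →₀ (W →₀ ℤ))) ⧸ (oneSubD Brow Crow).range),
      ∀ p : (V →₀ ℤ) × (W →₀ ℤ),
        iso (QuotientAddGroup.mk p) = QuotientAddGroup.mk (inclJ p) := by
  have hj : (mapK Brow Crow).range ≤ (oneSubD Brow Crow).range.comap inclJ := by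
    rintro _ ⟨x, rfl⟩
    refine ⟨(-x, 0), ?_⟩
    simp [oneSubD_apply, mapK_apply, inclJ_apply, sub_eq_add_neg, add_comm]
  have hr : (oneSubD Brow Crow).range ≤ (mapK Brow Crow).range.comap retr := by
    rintro _ ⟨⟨x, m⟩, rfl⟩
    refine ⟨-x, ?_⟩
    simp [oneSubD_apply, mapK_apply, retr_apply, sumComp_single, sumComp_shift,
      sub_eq_add_neg, add_comm]
  let f := QuotientAddGroup.map _ _ inclJ hj
  let g := QuotientAddGroup.map _ _ retr hr
  have hgf : ∀ q, g (f q) = q := by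
    intro q
    induction q using QuotientAddGroup.induction_on with
    | H p =>
      show g (f (QuotientAddGroup.mk p)) = _
      rw [QuotientAddGroup.map_mk, QuotientAddGroup.map_mk]
      congr 1
      simp [retr_apply, inclJ_apply, sumComp_single]
  have hfg : ∀ q, f (g q) = q := by
    intro q
    induction q using QuotientAddGroup.induction_on with
    | H p =>
      show f (g (QuotientAddGroup.mk p)) = _
      rw [QuotientAddGroup.map_mk, QuotientAddGroup.map_mk]
      rw [QuotientAddGroup.eq_iff_sub_mem]
      have := tail_mem Brow Crow p.2
      simpa [inclJ_apply, retr_apply, Prod.sub_def] using this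
  let e : (((V →₀ ℤ) × (W →₀ ℤ)) ⧸ (mapK Brow Crow).range) ≃+
      (((V →₀ ℤ) × (ℕ →₀ (W →₀ ℤ))) ⧸ (oneSubD Brow Crow).range) :=
    { toFun := f, invFun := g, left_inv := hgf, right_inv := hfg,
      map_add' := f.map_add }
  exact ⟨e, fun p => QuotientAddGroup.map_mk (mapK Brow Crow).range (oneSubD Brow Crow).range inclJ hj p⟩
end
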